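/- Let 0 < α < 1 and let a, b be reals with a > 1 > b > 0 and (ln a)/(ln b) irrational. Let E(a) = diag(a, 1, a^(α/(α−1))), E(b) = diag(b, 1, b^(α/(α−1))), and S = diag(1, −1, 1) act on ℝ³. If C ⊆ ℝ³ is a closed convex cone such that E(a)(C) ⊆ C, E(b)(C) ⊆ C, S(C) ⊆ C, the point (1,1,1) belongs to C, and the point (α, 1, 1−α) belongs to the dual cone C*, then C = K_α. -/

import Mathlib

/-!
Write `β = α / (α - 1)`. Since `E(t)(e^z, 1, e^{βz}) = (e^{z + log t}, 1, e^{β(z + log t)})`, the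
orbit of `(1,1,1)` under the semigroup generated by `E(a)` and `E(b)` is the curve
`(e^z, 1, e^{βz})` at the parameters `z ∈ ℕ log a + ℕ log b`. As `log a > 0 > log b` have
irrational ratio, these parameters are dense, so the whole curve lies in the closed set `C`.
The diagonal maps `E(a)`, `E(b)` are self-adjoint and hence also preserve `C*`, which by the
same argument contains the whole curve `(α e^z, 1, (1 - α) e^{βz})`.

Pairing `x ∈ C` and `S x` with this dual curve gives
`|x₂| ≤ α e^z x₁ + (1 - α) e^{βz} x₃` for all `z`, and the infimum of the right-hand side over
`z` is `x₁^α x₃^{1-α}` (equality case of the weighted AM-GM inequality), so `C ⊆ K_α`.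
Conversely, a point of `K_α` with `x₁, x₃ > 0` is a convex combination of a multiple of a
curve point and its image under `S`, and every other point of `K_α` is a limit of such points.
-/

open Real

/-- The power cone `K_α = {(x₁,x₂,x₃) : x₁ ≥ 0, x₃ ≥ 0, x₁^α·x₃^(1−α) ≥ |x₂|}`
(real powers are `Real.rpow`). -/
def Kpow (α : ℝ) : Set (Fin 3 → ℝ) :=
  {x | 0 ≤ x 0 ∧ 0 ≤ x 2 ∧ |x 1| ≤ x 0 ^ α * x 2 ^ (1 - α)}

/-- The dual cone of `C ⊆ ℝ³` with respect to the standard inner product. -/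
def dualCone (C : Set (Fin 3 → ℝ)) : Set (Fin 3 → ℝ) :=
  {y | ∀ x ∈ C, 0 ≤ y 0 * x 0 + y 1 * x 1 + y 2 * x 2}

/-- The diagonal matrix `E(a) = diag(a, 1, a^(α/(α−1)))` acting on `ℝ³`. -/
noncomputable def Emap (α a : ℝ) (x : Fin 3 → ℝ) : Fin 3 → ℝ :=
  ![a * x 0, x 1, a ^ (α / (α - 1)) * x 2]

/-- The diagonal matrix `S = diag(1, −1, 1)` acting on `ℝ³`. -/
def Smap (x : Fin 3 → ℝ) : Fin 3 → ℝ := ![x 0, -x 1, x 2]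

open Filter Set Topology

namespace AddSubmonoid

lemma exists_mem_Ioo_of_le_of_pos {M : AddSubmonoid ℝ} {w e a b : ℝ} (hw : w ∈ M) (hwa : w ≤ a)
    (he : e ∈ M) (he0 : 0 < e) (heab : e < b - a) : ∃ c ∈ M, a < c ∧ c < b := by
  set N := ⌊(a - w) / e⌋₊
  have hN₁ : (a - w) / e < N + 1 := Nat.lt_floor_add_one _
  have hN₂ : (N : ℝ) ≤ (a - w) / e := Nat.floor_le (div_nonneg (sub_nonneg.2 hwa) he0.le)
  rw [div_lt_iff₀ he0] at hN₁
  rw [le_div_iff₀ he0] at hN₂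
  refine ⟨w + (N + 1) • e, add_mem hw (nsmul_mem he _), ?_, ?_⟩ <;>
  · push_cast [nsmul_eq_mul]
    linarith

open Pointwise in
lemma dense_of_forall_exists_abs_lt {M : AddSubmonoid ℝ} {x y : ℝ} (hx : x ∈ M) (hx0 : 0 < x)
    (hy : y ∈ M) (hy0 : y < 0) (hsmall : ∀ ε > 0, ∃ e ∈ M, e ≠ 0 ∧ |e| < ε) :
    Dense (M : Set ℝ) := by
  refine dense_iff_exists_between.2 fun a b hab => ?_
  obtain ⟨e, heM, he0, heab⟩ := hsmall (b - a) (sub_pos.2 hab)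
  rcases he0.lt_or_gt with hneg | hpos
  · rw [abs_of_neg hneg] at heab
    obtain ⟨n, hn⟩ := Archimedean.arch b hx0
    obtain ⟨c, hc, hbc, hca⟩ := exists_mem_Ioo_of_le_of_pos (M := -M) (w := -(n • x))
      (a := -b) (b := -a) (by simpa using nsmul_mem hx n) (by linarith) (by simpa using heM)
      (neg_pos.2 hneg) (by linarith)
    exact ⟨-c, hc, by linarith, by linarith⟩
  · rw [abs_of_pos hpos] at heab
    obtain ⟨n, hn⟩ := Archimedean.arch (-a) (neg_pos.2 hy0)
    exact exists_mem_Ioo_of_le_of_pos (nsmul_mem hy n) (by rw [smul_neg] at hn; linarith) heM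
      hpos heab

end AddSubmonoid

lemma exists_mem_addSubmonoidClosure_pair_abs_lt {p q : ℝ} (hp : 0 < p) (hq : q < 0)
    (hpq : Irrational (p / q)) {ε : ℝ} (hε : 0 < ε) :
    ∃ e ∈ AddSubmonoid.closure {p, q}, e ≠ 0 ∧ |e| < ε := by
  have hq₀ : 0 < -q := neg_pos.2 hq
  obtain ⟨n, hn⟩ := exists_nat_one_div_lt (lt_min one_pos (div_pos hε hq₀))
  obtain ⟨j, k, hk, -, hjk⟩ := Real.exists_int_int_abs_mul_sub_le (-(p / q)) n.succ_pos
  replace hjk : |k * -(p / q) - j| < min 1 (ε / -q) := by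
    refine hjk.trans_lt (lt_of_le_of_lt ?_ hn)
    gcongr
    linarith
  rw [lt_min_iff] at hjk
  lift k to ℕ using hk.le
  push_cast at hjk
  have hj : 0 ≤ j := by
    have hξ : 0 < -(p / q) := neg_pos.2 (div_neg_of_pos_of_neg hp hq)
    have : (-1 : ℝ) < j := by
      linarith [(abs_lt.1 hjk.1).2, mul_pos (by exact_mod_cast hk : (0 : ℝ) < k) hξ]
    have : (-1 : ℤ) < j := by exact_mod_cast this
    omega
  lift j to ℕ using hj
  push_cast at hjk
  have he : (k : ℝ) * p + j * q = -q * (k * -(p / q) - j) := by field_simp [hq.ne]; ring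
  refine ⟨k • p + j • q, add_mem (nsmul_mem (AddSubmonoid.subset_closure (by simp)) _)
    (nsmul_mem (AddSubmonoid.subset_closure (by simp)) _), ?_, ?_⟩ <;>
    rw [nsmul_eq_mul, nsmul_eq_mul, he]
  · exact mul_ne_zero hq₀.ne'
      (sub_ne_zero.2 ((hpq.neg.natCast_mul (by exact_mod_cast hk.ne')).ne_nat j))
  · rw [abs_mul, abs_of_pos hq₀, ← lt_div_iff₀' hq₀]
    exact hjk.2

lemma dense_addSubmonoidClosure_pair {p q : ℝ} (hp : 0 < p) (hq : q < 0)
    (hpq : Irrational (p / q)) : Dense (AddSubmonoid.closure {p, q} : Set ℝ) :=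
  AddSubmonoid.dense_of_forall_exists_abs_lt (AddSubmonoid.subset_closure (by simp)) hp
    (AddSubmonoid.subset_closure (by simp)) hq
    fun _ hε => exists_mem_addSubmonoidClosure_pair_abs_lt hp hq hpq hε

lemma forall_mem_of_dense_addSubmonoidClosure {X : Type*} [TopologicalSpace X] {s : Set ℝ}
    (hs : Dense (AddSubmonoid.closure s : Set ℝ)) {F : ℝ → X} (hF : Continuous F) {D : Set X}
    (hD : IsClosed D) (h0 : F 0 ∈ D) (hstep : ∀ t ∈ s, ∀ z, F z ∈ D → F (t + z) ∈ D) (z : ℝ) :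
    F z ∈ D :=
  hs.induction (P := fun z => F z ∈ D)
    (fun _ hx => AddSubmonoid.closure_induction_left (motive := fun x _ => F x ∈ D) h0
      (fun t ht y _ hy => hstep t ht y hy) hx)
    (hD.preimage hF) z

noncomputable def expCurve (c₀ c₂ β z : ℝ) : Fin 3 → ℝ := ![c₀ * exp z, 1, c₂ * exp (β * z)]

lemma continuous_expCurve (c₀ c₂ β : ℝ) : Continuous (expCurve c₀ c₂ β) := by
  unfold expCurve
  fun_prop

lemma Emap_expCurve {α t : ℝ} (ht : 0 < t) (c₀ c₂ z : ℝ) :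
    Emap α t (expCurve c₀ c₂ (α / (α - 1)) z) = expCurve c₀ c₂ (α / (α - 1)) (log t + z) := by
  ext i
  fin_cases i <;>
    simp [Emap, expCurve, exp_add, exp_log ht, rpow_def_of_pos ht, mul_comm (log t), mul_add] <;>
    ring

lemma isClosed_dualCone (C : Set (Fin 3 → ℝ)) : IsClosed (dualCone C) := by
  simp only [dualCone, ofPred_forall]
  exact isClosed_iInter fun x => isClosed_iInter fun _ => isClosed_le continuous_const (by fun_prop)

lemma mapsTo_Emap_dualCone {α t : ℝ} {C : Set (Fin 3 → ℝ)} (h : MapsTo (Emap α t) C C) :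
    MapsTo (Emap α t) (dualCone C) (dualCone C) := by
  intro y hy x hx
  convert hy _ (h hx) using 1
  simp [Emap]
  ring

lemma abs_mul_le_of_mem_dualCone {C : Set (Fin 3 → ℝ)} {x y : Fin 3 → ℝ} (hy : y ∈ dualCone C)
    (hx : x ∈ C) (hSx : Smap x ∈ C) : |y 1 * x 1| ≤ y 0 * x 0 + y 2 * x 2 := by
  have h₁ := hy x hx
  have h₂ := hy _ hSx
  simp only [Smap, Matrix.cons_val] at h₂
  rw [abs_le]
  constructor <;> linarith

lemma nonneg_of_forall_nonneg_mul_exp_add_mul_exp {A B γ δ : ℝ} (hδγ : δ < γ)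
    (h : ∀ z, 0 ≤ A * exp (γ * z) + B * exp (δ * z)) : 0 ≤ A := by
  have hlim : Tendsto (fun z => A + B * exp ((δ - γ) * z)) atTop (𝓝 A) := by
    simpa using ((tendsto_exp_atBot.comp
      (tendsto_id.const_mul_atTop_of_neg (sub_neg.2 hδγ))).const_mul B).const_add A
  refine ge_of_tendsto' hlim fun z => ?_
  have hexp : exp (-(γ * z)) * exp (γ * z) = 1 := by rw [← exp_add]; simp
  convert mul_nonneg (exp_pos (-(γ * z))).le (h z) using 1
  rw [sub_mul, sub_eq_add_neg, exp_add]
  linear_combination -A * hexp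

lemma exists_exp_mul_eq_rpow_mul_rpow {α u v : ℝ} (hα : α ≠ 1) (hu : 0 < u) (hv : 0 < v) :
    ∃ z, exp z * u = u ^ α * v ^ (1 - α) ∧
      exp (α / (α - 1) * z) * v = u ^ α * v ^ (1 - α) := by
  have hα' : α - 1 ≠ 0 := sub_ne_zero.2 hα
  have hexp_mul : ∀ w > 0, ∀ s, exp s * w = exp (s + log w) := fun w hw s => by
    rw [exp_add, exp_log hw]
  refine ⟨(1 - α) * (log v - log u), ?_, ?_⟩ <;>
  · simp only [hexp_mul u hu, hexp_mul v hv, rpow_def_of_pos hu, rpow_def_of_pos hv, ← exp_add]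
    congr 1
    field_simp
    ring

lemma le_rpow_mul_rpow_of_forall_le {α u v c : ℝ} (hα0 : 0 < α) (hα1 : α < 1) (hu : 0 ≤ u)
    (hv : 0 ≤ v) (h : ∀ z, c ≤ α * exp z * u + (1 - α) * exp (α / (α - 1) * z) * v) :
    c ≤ u ^ α * v ^ (1 - α) := by
  have hcont : Continuous fun ε : ℝ => (u + ε) ^ α * (v + ε) ^ (1 - α) :=
    ((continuous_rpow_const hα0.le).comp (continuous_const_add u)).mul
      ((continuous_rpow_const (by linarith)).comp (continuous_const_add v))
  have hbound : ∀ ε > 0, c ≤ (u + ε) ^ α * (v + ε) ^ (1 - α) := fun ε hε => by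
    obtain ⟨z, hz₀, hz₂⟩ :=
      exists_exp_mul_eq_rpow_mul_rpow (u := u + ε) (v := v + ε) hα1.ne (by linarith) (by linarith)
    calc c ≤ α * exp z * u + (1 - α) * exp (α / (α - 1) * z) * v := h z
      _ ≤ α * exp z * (u + ε) + (1 - α) * exp (α / (α - 1) * z) * (v + ε) := by
        gcongr <;> linarith
      _ = (u + ε) ^ α * (v + ε) ^ (1 - α) := by rw [mul_assoc, mul_assoc (1 - α), hz₀, hz₂]; ring
  simpa using ge_of_tendsto ((hcont.tendsto 0).mono_left nhdsWithin_le_nhds)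
    (eventually_nhdsWithin_of_forall (s := Ioi 0) hbound)

lemma mem_Kpow_of_forall_abs_le {α : ℝ} {x : Fin 3 → ℝ} (hα0 : 0 < α) (hα1 : α < 1)
    (h : ∀ z, |x 1| ≤ α * exp z * x 0 + (1 - α) * exp (α / (α - 1) * z) * x 2) :
    x ∈ Kpow α := by
  have hβ : α / (α - 1) < 0 := div_neg_of_pos_of_neg hα0 (by linarith)
  have hnonneg z := (abs_nonneg _).trans (h z)
  have hx₀ : 0 ≤ α * x 0 := by
    refine nonneg_of_forall_nonneg_mul_exp_add_mul_exp (B := (1 - α) * x 2)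
      (by linarith : α / (α - 1) < 1) fun z => ?_
    rw [one_mul]
    linarith [hnonneg z]
  have hx₂ : 0 ≤ (1 - α) * x 2 := by
    refine nonneg_of_forall_nonneg_mul_exp_add_mul_exp (B := α * x 0)
      (by linarith : -1 < -(α / (α - 1))) fun z => ?_
    rw [neg_one_mul, neg_mul, ← mul_neg]
    linarith [hnonneg (-z)]
  have hx₀' : 0 ≤ x 0 := nonneg_of_mul_nonneg_right hx₀ hα0
  have hx₂' : 0 ≤ x 2 := nonneg_of_mul_nonneg_right hx₂ (by linarith)
  exact ⟨hx₀', hx₂', le_rpow_mul_rpow_of_forall_le hα0 hα1 hx₀' hx₂' h⟩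

section

variable {C : Set (Fin 3 → ℝ)}

lemma mem_of_abs_le (hconv : Convex ℝ C) (hS : MapsTo Smap C C) {u t v w : ℝ}
    (hC : ![u, t, v] ∈ C) (ht : 0 < t) (hw : |w| ≤ t) : ![u, w, v] ∈ C := by
  have hC' : ![u, -t, v] ∈ C := by simpa [Smap] using hS hC
  rw [abs_le] at hw
  convert hconv hC' hC (a := (t - w) / (2 * t)) (b := (t + w) / (2 * t))
    (div_nonneg (by linarith) (by linarith)) (div_nonneg (by linarith) (by linarith))
    (by field_simp; ring) using 1
  ext i
  fin_cases i <;> simp <;> field_simp <;> ring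

lemma mem_of_mem_Kpow_of_pos {α : ℝ} (hα : α ≠ 1) (hconv : Convex ℝ C)
    (hcone : ∀ (c : ℝ) (x : Fin 3 → ℝ), 0 ≤ c → x ∈ C → c • x ∈ C) (hS : MapsTo Smap C C)
    (hf : ∀ z, expCurve 1 1 (α / (α - 1)) z ∈ C) {x : Fin 3 → ℝ} (hx : x ∈ Kpow α)
    (hx₀ : 0 < x 0) (hx₂ : 0 < x 2) : x ∈ C := by
  obtain ⟨z, hz₀, hz₂⟩ := exists_exp_mul_eq_rpow_mul_rpow hα hx₀ hx₂
  set t := x 0 ^ α * x 2 ^ (1 - α)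
  have ht : 0 < t := by positivity
  have hC : ![x 0, t, x 2] ∈ C := by
    convert hcone t _ ht.le (hf (-z)) using 1
    ext i
    fin_cases i
    · simp [expCurve, ← hz₀, exp_neg]
      field_simp
    · simp [expCurve]
    · simp [expCurve, ← hz₂, exp_neg]
      field_simp
  convert mem_of_abs_le hconv hS hC ht hx.2.2 using 1
  ext i
  fin_cases i <;> rfl

lemma Kpow_subset_of_expCurve_mem {α : ℝ} (hα0 : 0 < α) (hα1 : α < 1) (hclosed : IsClosed C)
    (hconv : Convex ℝ C) (hcone : ∀ (c : ℝ) (x : Fin 3 → ℝ), 0 ≤ c → x ∈ C → c • x ∈ C)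
    (hS : MapsTo Smap C C) (hf : ∀ z, expCurve 1 1 (α / (α - 1)) z ∈ C) : Kpow α ⊆ C := by
  intro x hx
  have hshift : ∀ ε : ℝ, 0 < ε → x + ε • ![1, 0, 1] ∈ C := fun ε hε => by
    have hx₀ : 0 < x 0 + ε := by linarith [hx.1]
    have hx₂ : 0 < x 2 + ε := by linarith [hx.2.1]
    have hxε : x + ε • ![1, 0, 1] ∈ Kpow α := by
      have hmono : x 0 ^ α * x 2 ^ (1 - α) ≤ (x 0 + ε) ^ α * (x 2 + ε) ^ (1 - α) := by
        gcongr <;> linarith [hx.1, hx.2.1, rpow_nonneg hx.2.1 (1 - α)]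
      exact ⟨by simpa using hx₀.le, by simpa using hx₂.le, by simpa using hx.2.2.trans hmono⟩
    exact mem_of_mem_Kpow_of_pos hα1.ne hconv hcone hS hf hxε (by simpa using hx₀)
      (by simpa using hx₂)
  have hlim : Tendsto (fun ε : ℝ => x + ε • ![1, 0, 1]) (𝓝[>] 0) (𝓝 x) := by
    have : Continuous fun ε : ℝ => x + ε • ![(1 : ℝ), 0, 1] := by fun_prop
    simpa using (this.tendsto 0).mono_left nhdsWithin_le_nhds
  exact hclosed.mem_of_tendsto hlim (eventually_nhdsWithin_of_forall hshift)

end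

lemma expCurve_mem_of_mapsTo {α a b c₀ c₂ : ℝ} {D : Set (Fin 3 → ℝ)} (hD : IsClosed D)
    (ha : 0 < a) (hb : 0 < b) (hdense : Dense (AddSubmonoid.closure {log a, log b} : Set ℝ))
    (hEa : MapsTo (Emap α a) D D) (hEb : MapsTo (Emap α b) D D)
    (h₀ : expCurve c₀ c₂ (α / (α - 1)) 0 ∈ D) (z : ℝ) : expCurve c₀ c₂ (α / (α - 1)) z ∈ D := by
  refine forall_mem_of_dense_addSubmonoidClosure hdense (continuous_expCurve _ _ _) hD h₀ ?_ z
  rintro t (rfl | rfl) z hz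
  · exact Emap_expCurve ha c₀ c₂ z ▸ hEa hz
  · exact Emap_expCurve hb c₀ c₂ z ▸ hEb hz

/-- For `0 < α < 1` and `a > 1 > b > 0` with `(ln a)/(ln b)` irrational, any closed
convex cone `C` stable under `E(a)`, `E(b)` and `S`, containing `(1,1,1)` and with
`(α,1,1−α)` in its dual cone, equals the power cone `K_α`. -/
theorem stable_cone_eq_Kpow (α a b : ℝ) (hα0 : 0 < α) (hα1 : α < 1)
    (ha : 1 < a) (hb1 : b < 1) (hb0 : 0 < b)
    (hirr : Irrational (Real.log a / Real.log b))
    (C : Set (Fin 3 → ℝ))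
    (hclosed : IsClosed C) (hconv : Convex ℝ C)
    (hcone : ∀ (c : ℝ) (x : Fin 3 → ℝ), 0 ≤ c → x ∈ C → c • x ∈ C)
    (hEa : Set.MapsTo (Emap α a) C C) (hEb : Set.MapsTo (Emap α b) C C)
    (hS : Set.MapsTo Smap C C)
    (hτ : (![1, 1, 1] : Fin 3 → ℝ) ∈ C)
    (hπ : (![α, 1, 1 - α] : Fin 3 → ℝ) ∈ dualCone C) :
    C = Kpow α := by
  have ha0 : 0 < a := by linarith
  have hdense := dense_addSubmonoidClosure_pair (log_pos ha) (log_neg hb0 hb1) hirr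
  have hf : ∀ z, expCurve 1 1 (α / (α - 1)) z ∈ C :=
    expCurve_mem_of_mapsTo hclosed ha0 hb0 hdense hEa hEb (by simpa [expCurve] using hτ)
  have hg : ∀ z, expCurve α (1 - α) (α / (α - 1)) z ∈ dualCone C :=
    expCurve_mem_of_mapsTo (isClosed_dualCone C) ha0 hb0 hdense (mapsTo_Emap_dualCone hEa)
      (mapsTo_Emap_dualCone hEb) (by simpa [expCurve] using hπ)
  refine Subset.antisymm (fun x hx => mem_Kpow_of_forall_abs_le hα0 hα1 fun z => ?_)
    (Kpow_subset_of_expCurve_mem hα0 hα1 hclosed hconv hcone hS hf)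
  simpa [expCurve, mul_comm, mul_assoc] using abs_mul_le_of_mem_dualCone (hg z) hx (hS hx)
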